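/- Assume the distributional Sturm–Liouville equation with separated boundary conditions has eigenvalues λ₀ < λ₁ < ⋯ with λₙ(S_{α,β}) strictly increasing in β, and the Dirichlet eigenvalues satisfy: the eigenfunction of λₙᴰ has exactly n zeros in (a,b). If λ is any eigenvalue of a separated condition S_{α,β} with λ > λₙᴰ, then its eigenfunction has at least n+1 zeros in (a,b). Consequently λₙ(S_{α,β}) ≤ λₙᴰ for all (α,β). -/

import Mathlib

/-!
For solutions `y` (eigenvalue `λ`) and `z` (eigenvalue `μ < λ`) of the quasi-derivative system,
the Wronskian `W = y z¹ - y¹ z` is absolutely continuous with `W' = (λ - μ) r y z`. If `z`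
vanishes at `c < d` and is positive on `(c, d)`, then `z¹ c ≥ 0 ≥ z¹ d`, because the integrating
factor `exp ∫ s` turns `z'` into `z¹ / p`. So `y` cannot be positive on `(c, d)`: otherwise
`W d - W c = y d z¹ d - y c z¹ c ≤ 0 < (λ - μ) ∫ r y z`. Hence `y` vanishes in each of the `n + 1`
gaps into which `a`, `b` and the `n` interior zeros of the `n`-th Dirichlet eigenfunction cut
`[a, b]`. The `n`-th separated eigenfunction has only `n` interior zeros, so `λₙ ≤ λₙᴰ`.
-/

open MeasureTheory intervalIntegral Set Real

/-- A (Carathéodory) solution of the distributional Sturm–Liouville equation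
`−(y¹)′ + s·y¹ + q·y = λ·r·y` on `[a,b]`, written as a first-order system for
`y` and the quasi-derivative `y1 = p(y′+sy)` in integral form. -/
def SLSolution (a b lam : ℝ) (p q r s : ℝ → ℝ) (y y1 : ℝ → ℝ) : Prop :=
  ContinuousOn y (Set.Icc a b) ∧ ContinuousOn y1 (Set.Icc a b) ∧
  ∀ x ∈ Set.Icc a b,
    y x = y a + ∫ t in a..x, (1 / p t * y1 t - s t * y t) ∧
    y1 x = y1 a + ∫ t in a..x, (s t * y1 t + (q t - lam * r t) * y t)

open Filter
open scoped NNReal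

namespace AbsolutelyContinuousOnInterval

theorem congr {X : Type*} [PseudoMetricSpace X] {f g : ℝ → X} {a b : ℝ}
    (hf : AbsolutelyContinuousOnInterval f a b) (hfg : EqOn f g (uIcc a b)) :
    AbsolutelyContinuousOnInterval g a b := by
  refine Tendsto.congr' (eventually_inf_principal.2 (Eventually.of_forall fun E hE => ?_)) hf
  exact Finset.sum_congr rfl fun i hi => by rw [hfg (hE.1 i hi).1, hfg (hE.1 i hi).2]

theorem of_eq_add_integral {f F : ℝ → ℝ} {a b : ℝ} (hab : a ≤ b)
    (hf : IntervalIntegrable f volume a b) (hF : ∀ x ∈ Icc a b, F x = F a + ∫ t in a..x, f t) :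
    AbsolutelyContinuousOnInterval F a b := by
  refine ((LipschitzWith.const (F a)).lipschitzOnWith.absolutelyContinuousOnInterval.add
    (hf.absolutelyContinuousOnInterval_intervalIntegral left_mem_uIcc)).congr fun x hx => ?_
  rw [uIcc_of_le hab] at hx
  exact (hF x hx).symm

end AbsolutelyContinuousOnInterval

theorem LipschitzOnWith.comp_absolutelyContinuousOnInterval {X Y : Type*} [PseudoMetricSpace X]
    [PseudoMetricSpace Y] {g : X → Y} {K : ℝ≥0} {t : Set X} {f : ℝ → X} {a b : ℝ}
    (hg : LipschitzOnWith K g t) (hf : AbsolutelyContinuousOnInterval f a b)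
    (hft : MapsTo f (uIcc a b) t) : AbsolutelyContinuousOnInterval (g ∘ f) a b := by
  unfold AbsolutelyContinuousOnInterval at hf ⊢
  have hK := hf.const_mul (K : ℝ)
  rw [mul_zero] at hK
  refine squeeze_zero' (Eventually.of_forall fun _ => Finset.sum_nonneg fun _ _ => dist_nonneg)
    (eventually_inf_principal.2 (Eventually.of_forall fun E hE => ?_)) hK
  rw [Finset.mul_sum]
  exact Finset.sum_le_sum fun i hi => hg.dist_le_mul _ (hft (hE.1 i hi).1) _ (hft (hE.1 i hi).2)

theorem LocallyLipschitz.comp_absolutelyContinuousOnInterval {F Y : Type*}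
    [SeminormedAddCommGroup F] [PseudoMetricSpace Y] {g : F → Y} {f : ℝ → F} {a b : ℝ}
    (hg : LocallyLipschitz g) (hf : AbsolutelyContinuousOnInterval f a b) :
    AbsolutelyContinuousOnInterval (g ∘ f) a b := by
  obtain ⟨K, hK⟩ := LocallyLipschitzOn.exists_lipschitzOnWith_of_compact
    (isCompact_uIcc.image_of_continuousOn hf.continuousOn) hg.locallyLipschitzOn
  exact hK.comp_absolutelyContinuousOnInterval hf (mapsTo_image _ _)

theorem ae_hasDerivAt_of_eq_add_integral {f F : ℝ → ℝ} {a b : ℝ}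
    (hf : IntervalIntegrable f volume a b) (hF : ∀ x ∈ Icc a b, F x = F a + ∫ t in a..x, f t) :
    ∀ᵐ x, x ∈ Icc a b → HasDerivAt F (f x) x := by
  filter_upwards [hf.ae_hasDerivAt_integral, Measure.ae_ne volume a, Measure.ae_ne volume b]
    with x hx hxa hxb hx'
  have hxab : x ∈ Ioo a b := ⟨hx'.1.lt_of_ne hxa.symm, hx'.2.lt_of_ne hxb⟩
  have hmem : x ∈ uIcc a b := Icc_subset_uIcc (Ioo_subset_Icc_self hxab)
  refine ((hx hmem a left_mem_uIcc).const_add (F a)).congr_of_eventuallyEq ?_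
  filter_upwards [Icc_mem_nhds hxab.1 hxab.2] with t ht using hF t ht

theorem intervalIntegral.intervalIntegral_pos_of_ae_pos_on {f : ℝ → ℝ} {a b : ℝ}
    (hfi : IntervalIntegrable f volume a b) (hpos : ∀ᵐ x ∂volume.restrict (Ioo a b), 0 < f x)
    (hab : a < b) : 0 < ∫ x in a..b, f x := by
  have hpos' : ∀ᵐ x ∂volume.restrict (Ioc a b), 0 < f x :=
    ae_restrict_of_ae_eq_of_ae_restrict Ioo_ae_eq_Ioc hpos
  rw [integral_pos_iff_support_of_nonneg_ae'
    (by rw [uIoc_of_le hab.le]; exact hpos'.mono fun _ h => h.le) hfi]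
  refine ⟨hab, ((Measure.measure_Ioo_pos _).2 hab).trans_le (measure_mono_ae ?_)⟩
  filter_upwards [(ae_restrict_iff' measurableSet_Ioo).1 hpos] with x hx hxI
    using ⟨(hx hxI).ne', Ioo_subset_Ioc_self hxI⟩

theorem IsPreconnected.pos_or_neg_of_ne_zero {α : Type*} [TopologicalSpace α] {s : Set α}
    {f : α → ℝ} (hs : IsPreconnected s) (hf : ContinuousOn f s) (hne : ∀ x ∈ s, f x ≠ 0) :
    (∀ x ∈ s, 0 < f x) ∨ ∀ x ∈ s, f x < 0 := by
  by_contra! ⟨⟨x, hx, hfx⟩, ⟨y, hy, hfy⟩⟩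
  obtain ⟨t, ht, hft⟩ := hs.intermediate_value hx hy hf ⟨hfx, hfy⟩
  exact hne t ht hft

theorem ContinuousOn.nonneg_of_pos_on_Ioo {f : ℝ → ℝ} {c d : ℝ} (hf : ContinuousOn f (Icc c d))
    (hcd : c < d) (hpos : ∀ x ∈ Ioo c d, 0 < f x) : ∀ x ∈ Icc c d, 0 ≤ f x := by
  have hcl : IsClosed (Icc c d ∩ f ⁻¹' Ici 0) :=
    hf.preimage_isClosed_of_isClosed isClosed_Icc isClosed_Ici
  have hsub : Icc c d ⊆ Icc c d ∩ f ⁻¹' Ici 0 := (closure_Ioo hcd.ne).symm.subset.trans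
    (hcl.closure_subset_iff.2 fun x hx => ⟨Ioo_subset_Icc_self hx, (hpos x hx).le⟩)
  exact fun x hx => (hsub hx).2

theorem MeasureTheory.IntegrableOn.intervalIntegrable_mul_continuousOn {w g : ℝ → ℝ} {a b : ℝ}
    (hab : a ≤ b) (hw : IntegrableOn w (Ioo a b)) (hg : ContinuousOn g (Icc a b)) :
    IntervalIntegrable (fun t => w t * g t) volume a b := by
  rw [intervalIntegrable_iff_integrableOn_Ioo_of_le hab]
  exact hw.mul_continuousOn_of_subset hg measurableSet_Ioo isCompact_Icc Ioo_subset_Icc_self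

structure SLIntegrableCoeffs (a b : ℝ) (p q r s : ℝ → ℝ) : Prop where
  integrableOn_inv_p : IntegrableOn (fun x => 1 / p x) (Ioo a b)
  integrableOn_q : IntegrableOn q (Ioo a b)
  integrableOn_r : IntegrableOn r (Ioo a b)
  integrableOn_s : IntegrableOn s (Ioo a b)

namespace SLSolution

variable {a b lam mu : ℝ} {p q r s y y1 z z1 : ℝ → ℝ}

theorem const_mul (k : ℝ) (hy : SLSolution a b lam p q r s y y1) :
    SLSolution a b lam p q r s (fun x => k * y x) (fun x => k * y1 x) := by
  refine ⟨continuousOn_const.mul hy.1, continuousOn_const.mul hy.2.1, fun x hx => ?_⟩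
  obtain ⟨hyx, hy1x⟩ := hy.2.2 x hx
  beta_reduce
  rw [show (fun t => 1 / p t * (k * y1 t) - s t * (k * y t))
      = fun t => k * (1 / p t * y1 t - s t * y t) by funext t; ring,
    show (fun t => s t * (k * y1 t) + (q t - lam * r t) * (k * y t))
      = fun t => k * (s t * y1 t + (q t - lam * r t) * y t) by funext t; ring,
    intervalIntegral.integral_const_mul, intervalIntegral.integral_const_mul, hyx, hy1x]
  constructor <;> ring

theorem intervalIntegrable (hc : SLIntegrableCoeffs a b p q r s)
    (hy : SLSolution a b lam p q r s y y1) (hab : a ≤ b) :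
    IntervalIntegrable (fun t => 1 / p t * y1 t - s t * y t) volume a b ∧
      IntervalIntegrable (fun t => s t * y1 t + (q t - lam * r t) * y t) volume a b :=
  ⟨(hc.integrableOn_inv_p.intervalIntegrable_mul_continuousOn hab hy.2.1).sub
      (hc.integrableOn_s.intervalIntegrable_mul_continuousOn hab hy.1),
    (hc.integrableOn_s.intervalIntegrable_mul_continuousOn hab hy.2.1).add
      ((hc.integrableOn_q.sub (hc.integrableOn_r.const_mul lam)).intervalIntegrable_mul_continuousOn
        hab hy.1)⟩

theorem absolutelyContinuousOnInterval (hc : SLIntegrableCoeffs a b p q r s)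
    (hy : SLSolution a b lam p q r s y y1) (hab : a ≤ b) :
    AbsolutelyContinuousOnInterval y a b ∧ AbsolutelyContinuousOnInterval y1 a b :=
  ⟨.of_eq_add_integral hab (hy.intervalIntegrable hc hab).1 fun x hx => (hy.2.2 x hx).1,
    .of_eq_add_integral hab (hy.intervalIntegrable hc hab).2 fun x hx => (hy.2.2 x hx).2⟩

theorem ae_hasDerivAt (hc : SLIntegrableCoeffs a b p q r s)
    (hy : SLSolution a b lam p q r s y y1) (hab : a ≤ b) :
    ∀ᵐ x, x ∈ Icc a b → HasDerivAt y (1 / p x * y1 x - s x * y x) x ∧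
      HasDerivAt y1 (s x * y1 x + (q x - lam * r x) * y x) x := by
  filter_upwards [ae_hasDerivAt_of_eq_add_integral (hy.intervalIntegrable hc hab).1
      fun x hx => (hy.2.2 x hx).1,
    ae_hasDerivAt_of_eq_add_integral (hy.intervalIntegrable hc hab).2
      fun x hx => (hy.2.2 x hx).2] with x hyx hy1x hx using ⟨hyx hx, hy1x hx⟩

theorem wronskian_sub (hc : SLIntegrableCoeffs a b p q r s)
    (hy : SLSolution a b lam p q r s y y1) (hz : SLSolution a b mu p q r s z z1)
    {c d : ℝ} (hac : a ≤ c) (hcd : c ≤ d) (hdb : d ≤ b) :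
    (y d * z1 d - y1 d * z d) - (y c * z1 c - y1 c * z c)
      = (lam - mu) * ∫ t in c..d, r t * (y t * z t) := by
  have hab : a ≤ b := hac.trans (hcd.trans hdb)
  obtain ⟨hy0, hy1⟩ := hy.absolutelyContinuousOnInterval hc hab
  obtain ⟨hz0, hz1⟩ := hz.absolutelyContinuousOnInterval hc hab
  have hsub : uIcc c d ⊆ uIcc a b := uIcc_subset_uIcc
    (mem_uIcc_of_le hac (hcd.trans hdb)) (mem_uIcc_of_le (hac.trans hcd) hdb)
  rw [← (((hy0.fun_mul hz1).fun_sub (hy1.fun_mul hz0)).mono hsub).integral_deriv_eq_sub,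
    ← intervalIntegral.integral_const_mul]
  refine integral_congr_ae ?_
  filter_upwards [hy.ae_hasDerivAt hc hab, hz.ae_hasDerivAt hc hab] with x hyx hzx hx
  rw [uIoc_of_le hcd] at hx
  obtain ⟨hy', hy1'⟩ := hyx ⟨hac.trans hx.1.le, hx.2.trans hdb⟩
  obtain ⟨hz', hz1'⟩ := hzx ⟨hac.trans hx.1.le, hx.2.trans hdb⟩
  rw [((hy'.fun_mul hz1').fun_sub (hy1'.fun_mul hz')).deriv]
  ring

theorem mul_exp_integral_le (hc : SLIntegrableCoeffs a b p q r s)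
    (hppos : ∀ᵐ x ∂(volume.restrict (Ioo a b)), 0 < p x)
    (hy : SLSolution a b lam p q r s y y1) {c e : ℝ} (hac : a ≤ c) (hce : c ≤ e) (heb : e ≤ b)
    (hy1 : ∀ x ∈ Icc c e, 0 ≤ y1 x) :
    y c * exp (∫ t in a..c, s t) ≤ y e * exp (∫ t in a..e, s t) := by
  have hab : a ≤ b := hac.trans (hce.trans heb)
  have hs : IntervalIntegrable s volume a b :=
    (intervalIntegrable_iff_integrableOn_Ioo_of_le hab).2 hc.integrableOn_s
  have hE : AbsolutelyContinuousOnInterval (fun x => exp (∫ t in a..x, s t)) a b :=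
    contDiff_exp.locallyLipschitz.comp_absolutelyContinuousOnInterval
      (hs.absolutelyContinuousOnInterval_intervalIntegral left_mem_uIcc)
  have hp : ∀ᵐ x, x ∈ Icc a b → 0 < p x :=
    (ae_restrict_iff' measurableSet_Icc).1 (by rwa [← Measure.restrict_congr_set Ioo_ae_eq_Icc])
  have hsub : uIcc c e ⊆ uIcc a b := uIcc_subset_uIcc
    (mem_uIcc_of_le hac (hce.trans heb)) (mem_uIcc_of_le (hac.trans hce) heb)
  rw [← sub_nonneg,
    ← (((hy.absolutelyContinuousOnInterval hc hab).1.fun_mul hE).mono hsub).integral_deriv_eq_sub]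
  refine integral_nonneg_of_ae_restrict hce ?_
  rw [EventuallyLE, ae_restrict_iff' measurableSet_Icc]
  filter_upwards [hy.ae_hasDerivAt hc hab, hs.ae_hasDerivAt_integral, hp] with x hyx hSx hpx hx
  have hx' : x ∈ Icc a b := ⟨hac.trans hx.1, hx.2.trans heb⟩
  rw [Pi.zero_apply,
    ((hyx hx').1.fun_mul ((hSx (Icc_subset_uIcc hx') a left_mem_uIcc).exp)).deriv,
    show (1 / p x * y1 x - s x * y x) * exp (∫ t in a..x, s t)
        + y x * (exp (∫ t in a..x, s t) * s x) = 1 / p x * y1 x * exp (∫ t in a..x, s t) by ring]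
  have := hpx hx'
  have := hy1 x hx
  positivity

theorem quasiDeriv_nonneg_of_zero_of_pos (hc : SLIntegrableCoeffs a b p q r s)
    (hppos : ∀ᵐ x ∂(volume.restrict (Ioo a b)), 0 < p x)
    (hz : SLSolution a b mu p q r s z z1) {c d : ℝ} (hac : a ≤ c) (hcd : c < d) (hdb : d ≤ b)
    (hzc : z c = 0) (hpos : ∀ x ∈ Ioo c d, 0 < z x) : 0 ≤ z1 c := by
  by_contra! hz1c
  have hcont : ContinuousWithinAt z1 (Ici c) c :=
    (hz.2.1 c ⟨hac, (hcd.trans_le hdb).le⟩).mono_of_mem_nhdsWithin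
      (mem_of_superset (Icc_mem_nhdsGE (hcd.trans_le hdb)) (Icc_subset_Icc_left hac))
  obtain ⟨u, hcu, hu⟩ :=
    mem_nhdsGE_iff_exists_Icc_subset.1 (Tendsto.eventually_lt_const hz1c hcont)
  set e := min u ((c + d) / 2)
  have he : e ∈ Ioo c d := ⟨lt_min hcu (by linarith), (min_le_right _ _).trans_lt (by linarith)⟩
  have hmono := (hz.const_mul (-1)).mul_exp_integral_le hc hppos hac he.1.le
    (he.2.le.trans hdb) fun x hx => by
      simpa using (hu ⟨hx.1, hx.2.trans (min_le_left _ _)⟩ : z1 x < 0).le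
  rw [hzc, mul_zero, zero_mul] at hmono
  nlinarith [mul_pos (hpos e he) (exp_pos (∫ t in a..e, s t))]

theorem quasiDeriv_nonpos_of_zero_of_pos (hc : SLIntegrableCoeffs a b p q r s)
    (hppos : ∀ᵐ x ∂(volume.restrict (Ioo a b)), 0 < p x)
    (hz : SLSolution a b mu p q r s z z1) {c d : ℝ} (hac : a ≤ c) (hcd : c < d) (hdb : d ≤ b)
    (hzd : z d = 0) (hpos : ∀ x ∈ Ioo c d, 0 < z x) : z1 d ≤ 0 := by
  by_contra! hz1d
  have hcont : ContinuousWithinAt z1 (Iic d) d :=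
    (hz.2.1 d ⟨hac.trans hcd.le, hdb⟩).mono_of_mem_nhdsWithin
      (mem_of_superset (Icc_mem_nhdsLE (hac.trans_lt hcd)) (Icc_subset_Icc_right hdb))
  obtain ⟨l, hld, hl⟩ :=
    mem_nhdsLE_iff_exists_Icc_subset.1 (Tendsto.eventually_const_lt hz1d hcont)
  set e := max l ((c + d) / 2)
  have he : e ∈ Ioo c d := ⟨(by linarith : c < (c + d) / 2).trans_le (le_max_right _ _),
    max_lt hld (by linarith)⟩
  have hmono := hz.mul_exp_integral_le hc hppos (hac.trans he.1.le) he.2.le hdb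
    fun x hx => (hl ⟨(le_max_left _ _).trans hx.1, hx.2⟩ : 0 < z1 x).le
  rw [hzd, zero_mul] at hmono
  exact (mul_pos (hpos e he) (exp_pos _)).not_ge hmono

theorem exists_nonpos_of_lt (hc : SLIntegrableCoeffs a b p q r s)
    (hppos : ∀ᵐ x ∂(volume.restrict (Ioo a b)), 0 < p x)
    (hrpos : ∀ᵐ x ∂(volume.restrict (Ioo a b)), 0 < r x)
    (hy : SLSolution a b lam p q r s y y1) (hz : SLSolution a b mu p q r s z z1) (hlt : mu < lam)
    {c d : ℝ} (hac : a ≤ c) (hcd : c < d) (hdb : d ≤ b) (hzc : z c = 0) (hzd : z d = 0)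
    (hzpos : ∀ x ∈ Ioo c d, 0 < z x) : ∃ x ∈ Ioo c d, y x ≤ 0 := by
  by_contra! hypos
  have hsub : Icc c d ⊆ Icc a b := Icc_subset_Icc hac hdb
  have hW := hy.wronskian_sub hc hz hac hcd.le hdb
  have hz1c := hz.quasiDeriv_nonneg_of_zero_of_pos hc hppos hac hcd hdb hzc hzpos
  have hz1d := hz.quasiDeriv_nonpos_of_zero_of_pos hc hppos hac hcd hdb hzd hzpos
  have hy0 := (hy.1.mono hsub).nonneg_of_pos_on_Ioo hcd hypos
  have hint : 0 < ∫ t in c..d, r t * (y t * z t) := by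
    refine intervalIntegral.intervalIntegral_pos_of_ae_pos_on ?_ ?_ hcd
    · exact (hc.integrableOn_r.mono_set (Ioo_subset_Ioo hac hdb)
        ).intervalIntegrable_mul_continuousOn hcd.le ((hy.1.mul hz.1).mono hsub)
    · filter_upwards [ae_restrict_of_ae_restrict_of_subset (Ioo_subset_Ioo hac hdb) hrpos,
        ae_restrict_mem measurableSet_Ioo] with x hrx hx
      exact mul_pos hrx (mul_pos (hypos x hx) (hzpos x hx))
  rw [hzc, hzd] at hW
  nlinarith [mul_nonneg (hy0 c (left_mem_Icc.2 hcd.le)) hz1c,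
    mul_nonpos_of_nonneg_of_nonpos (hy0 d (right_mem_Icc.2 hcd.le)) hz1d,
    mul_pos (sub_pos.2 hlt) hint]

theorem exists_zero_of_lt (hc : SLIntegrableCoeffs a b p q r s)
    (hppos : ∀ᵐ x ∂(volume.restrict (Ioo a b)), 0 < p x)
    (hrpos : ∀ᵐ x ∂(volume.restrict (Ioo a b)), 0 < r x)
    (hy : SLSolution a b lam p q r s y y1) (hz : SLSolution a b mu p q r s z z1) (hlt : mu < lam)
    {c d : ℝ} (hac : a ≤ c) (hcd : c < d) (hdb : d ≤ b) (hzc : z c = 0) (hzd : z d = 0)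
    (hz0 : ∀ x ∈ Ioo c d, z x ≠ 0) : ∃ x ∈ Ioo c d, y x = 0 := by
  by_contra! hy0
  have hsub : Ioo c d ⊆ Icc a b := Ioo_subset_Icc_self.trans (Icc_subset_Icc hac hdb)
  have hsign : ∀ {w : ℝ → ℝ}, ContinuousOn w (Icc a b) → (∀ x ∈ Ioo c d, w x ≠ 0) →
      ∃ k : ℝ, ∀ x ∈ Ioo c d, 0 < k * w x := fun hw hw0 =>
    (isPreconnected_Ioo.pos_or_neg_of_ne_zero (hw.mono hsub) hw0).elim
      (fun h => ⟨1, fun x hx => by simpa using h x hx⟩)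
      (fun h => ⟨-1, fun x hx => by simpa using h x hx⟩)
  obtain ⟨k, hk⟩ := hsign hy.1 hy0
  obtain ⟨m, hm⟩ := hsign hz.1 hz0
  obtain ⟨x, hx, hkx⟩ := (hy.const_mul k).exists_nonpos_of_lt hc hppos hrpos (hz.const_mul m)
    hlt hac hcd hdb (by simp [hzc]) (by simp [hzd]) hm
  exact (hk x hx).not_ge hkx

end SLSolution

theorem exists_finset_zeros_of_forall_gap {z y : ℝ → ℝ} {a b : ℝ}
    (hgap : ∀ c d, a ≤ c → c < d → d ≤ b → z c = 0 → z d = 0 → (∀ x ∈ Ioo c d, z x ≠ 0) →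
      ∃ x ∈ Ioo c d, y x = 0)
    (n : ℕ) {c : ℝ} (hac : a ≤ c) (hcb : c < b) (hzc : z c = 0) (hzb : z b = 0)
    (hfin : {x ∈ Ioo c b | z x = 0}.Finite) (hcard : {x ∈ Ioo c b | z x = 0}.ncard = n) :
    ∃ Z : Finset ℝ, (↑Z : Set ℝ) ⊆ {x ∈ Ioo c b | y x = 0} ∧ n + 1 ≤ Z.card := by
  induction n generalizing c with
  | zero =>
    obtain ⟨x, hx, hyx⟩ := hgap c b hac hcb le_rfl hzc hzb fun x hx hzx =>
      ((Set.ncard_eq_zero hfin).1 hcard).subset ⟨hx, hzx⟩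
    exact ⟨{x}, by simpa using ⟨hx, hyx⟩, le_rfl⟩
  | succ n ih =>
    set S := {x ∈ Ioo c b | z x = 0}
    obtain ⟨m, ⟨hm, hzm⟩, hmin⟩ := Set.exists_min_image S id hfin
      (Set.nonempty_of_ncard_ne_zero (by omega))
    obtain ⟨x, hx, hyx⟩ := hgap c m hac hm.1 hm.2.le hzc hzm fun x hx hzx =>
      (hmin x ⟨⟨hx.1, hx.2.trans hm.2⟩, hzx⟩).not_gt hx.2
    have hS : {x ∈ Ioo m b | z x = 0} = S \ {m} := by
      ext t
      simp only [S, Set.mem_sdiff, mem_ofPred_eq, mem_Ioo, mem_singleton_iff]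
      constructor
      · rintro ⟨⟨hmt, htb⟩, hzt⟩
        exact ⟨⟨⟨hm.1.trans hmt, htb⟩, hzt⟩, hmt.ne'⟩
      · rintro ⟨⟨⟨hct, htb⟩, hzt⟩, htm⟩
        exact ⟨⟨(hmin t ⟨⟨hct, htb⟩, hzt⟩).lt_of_ne' htm, htb⟩, hzt⟩
    obtain ⟨Z, hZ, hZcard⟩ := ih (hac.trans hm.1.le) hm.2 hzm (hS ▸ hfin.sdiff)
      (by rw [hS, Set.ncard_sdiff_singleton_of_mem (show m ∈ S from ⟨hm, hzm⟩), hcard]; rfl)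
    have hxZ : x ∉ Z := fun h => (hZ h).1.1.not_gt hx.2
    refine ⟨insert x Z, ?_, by rw [Finset.card_insert_of_notMem hxZ]; omega⟩
    rw [Finset.coe_insert]
    refine insert_subset ⟨⟨hx.1, hx.2.trans hm.2⟩, hyx⟩ (hZ.trans fun t ht => ?_)
    exact ⟨⟨hm.1.trans ht.1.1, ht.1.2⟩, ht.2⟩

theorem SLSolution.exists_finset_zeros_of_lt {a b lam mu : ℝ} {p q r s y y1 z z1 : ℝ → ℝ}
    (hc : SLIntegrableCoeffs a b p q r s)
    (hppos : ∀ᵐ x ∂(volume.restrict (Ioo a b)), 0 < p x)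
    (hrpos : ∀ᵐ x ∂(volume.restrict (Ioo a b)), 0 < r x)
    (hy : SLSolution a b lam p q r s y y1) (hz : SLSolution a b mu p q r s z z1) (hlt : mu < lam)
    (hab : a < b) (hza : z a = 0) (hzb : z b = 0) {n : ℕ}
    (hfin : {x ∈ Ioo a b | z x = 0}.Finite) (hcard : {x ∈ Ioo a b | z x = 0}.ncard = n) :
    ∃ Z : Finset ℝ, (↑Z : Set ℝ) ⊆ {x ∈ Ioo a b | y x = 0} ∧ n + 1 ≤ Z.card :=
  exists_finset_zeros_of_forall_gap
    (fun _ _ hac hcd hdb hzc hzd hz0 =>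
      hy.exists_zero_of_lt hc hppos hrpos hz hlt hac hcd hdb hzc hzd hz0)
    n le_rfl hab hza hzb hfin hcard

theorem stmt17_general (a b : ℝ) (hab : a < b) (p q r s : ℝ → ℝ)
    (hp : IntegrableOn (fun x => 1 / p x) (Set.Ioo a b))
    (hq : IntegrableOn q (Set.Ioo a b))
    (hr : IntegrableOn r (Set.Ioo a b))
    (hs : IntegrableOn s (Set.Ioo a b))
    (hppos : ∀ᵐ x ∂(volume.restrict (Set.Ioo a b)), 0 < p x)
    (hrpos : ∀ᵐ x ∂(volume.restrict (Set.Ioo a b)), 0 < r x)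
    -- Dirichlet eigenvalues and eigenfunctions
    (lamD : ℕ → ℝ) (Psi Psi1 : ℕ → ℝ → ℝ)
    (hDsol : ∀ n, SLSolution a b (lamD n) p q r s (Psi n) (Psi1 n))
    (hDbc : ∀ n, Psi n a = 0 ∧ Psi n b = 0)
    (hDzeros : ∀ n, {x ∈ Set.Ioo a b | Psi n x = 0}.Finite ∧
      {x ∈ Set.Ioo a b | Psi n x = 0}.ncard = n)
    -- separated eigenvalues and eigenfunctions
    (lamS : ℝ → ℝ → ℕ → ℝ) (wS wS1 : ℝ → ℝ → ℕ → ℝ → ℝ)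
    (hSsol : ∀ α ∈ Set.Ico 0 Real.pi, ∀ β ∈ Set.Ioc 0 Real.pi, ∀ n,
      SLSolution a b (lamS α β n) p q r s (wS α β n) (wS1 α β n))
    (hSzeros : ∀ α ∈ Set.Ico 0 Real.pi, ∀ β ∈ Set.Ioc 0 Real.pi, ∀ n,
      {x ∈ Set.Ioo a b | wS α β n x = 0}.Finite ∧
      {x ∈ Set.Ioo a b | wS α β n x = 0}.ncard = n) :
    (∀ α ∈ Set.Ico 0 Real.pi, ∀ β ∈ Set.Ioc 0 Real.pi, ∀ n : ℕ,
      ∀ (lam : ℝ) (y y1 : ℝ → ℝ),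
        SLSolution a b lam p q r s y y1 →
        Real.cos α * y a - Real.sin α * y1 a = 0 →
        Real.cos β * y b - Real.sin β * y1 b = 0 →
        (∃ x ∈ Set.Icc a b, y x ≠ 0) →
        lamD n < lam →
        ∃ Z : Finset ℝ, (↑Z : Set ℝ) ⊆ {x ∈ Set.Ioo a b | y x = 0} ∧
          n + 1 ≤ Z.card) ∧
    (∀ α ∈ Set.Ico 0 Real.pi, ∀ β ∈ Set.Ioc 0 Real.pi, ∀ n,
      lamS α β n ≤ lamD n) := by
  have hc : SLIntegrableCoeffs a b p q r s := ⟨hp, hq, hr, hs⟩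
  have zeros_of_gt : ∀ n lam y y1, SLSolution a b lam p q r s y y1 → lamD n < lam →
      ∃ Z : Finset ℝ, (↑Z : Set ℝ) ⊆ {x ∈ Ioo a b | y x = 0} ∧ n + 1 ≤ Z.card :=
    fun n _ _ _ hy hlt => hy.exists_finset_zeros_of_lt hc hppos hrpos (hDsol n) hlt hab
      (hDbc n).1 (hDbc n).2 (hDzeros n).1 (hDzeros n).2
  refine ⟨fun _ _ _ _ n lam y y1 hy _ _ _ hlt => zeros_of_gt n lam y y1 hy hlt,
    fun α hα β hβ n => ?_⟩
  by_contra! hlt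
  obtain ⟨Z, hZ, hZcard⟩ := zeros_of_gt n _ _ _ (hSsol α hα β hβ n) hlt
  have hle := Set.ncard_le_ncard hZ (hSzeros α hα β hβ n).1
  rw [Set.ncard_coe_finset, (hSzeros α hα β hβ n).2] at hle
  omega

/-- Suppose the distributional Sturm–Liouville problem has Dirichlet eigenvalues
`lamD n` whose eigenfunctions `Psi n` have exactly `n` zeros in `(a,b)`, and separated
eigenvalues `lamS α β n` (for `S_{α,β}`) forming a strictly increasing sequence,
strictly increasing in `β`, with eigenfunctions having exactly `n` interior zeros.
Then any eigenfunction of a separated condition `S_{α,β}` whose eigenvalue exceeds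
`lamD n` has at least `n+1` zeros in `(a,b)`; consequently
`lamS α β n ≤ lamD n` for all `(α,β)` and `n`. -/
theorem stmt17 (a b : ℝ) (hab : a < b) (p q r s : ℝ → ℝ)
    (hp : IntegrableOn (fun x => 1 / p x) (Set.Ioo a b))
    (hq : IntegrableOn q (Set.Ioo a b))
    (hr : IntegrableOn r (Set.Ioo a b))
    (hs : IntegrableOn s (Set.Ioo a b))
    (hppos : ∀ᵐ x ∂(volume.restrict (Set.Ioo a b)), 0 < p x)
    (hrpos : ∀ᵐ x ∂(volume.restrict (Set.Ioo a b)), 0 < r x)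
    -- Dirichlet eigenvalues and eigenfunctions
    (lamD : ℕ → ℝ) (Psi Psi1 : ℕ → ℝ → ℝ)
    (hDmono : StrictMono lamD)
    (hDsol : ∀ n, SLSolution a b (lamD n) p q r s (Psi n) (Psi1 n))
    (hDbc : ∀ n, Psi n a = 0 ∧ Psi n b = 0)
    (hDnt : ∀ n, ∃ x ∈ Set.Icc a b, Psi n x ≠ 0)
    (hDzeros : ∀ n, {x ∈ Set.Ioo a b | Psi n x = 0}.Finite ∧
      {x ∈ Set.Ioo a b | Psi n x = 0}.ncard = n)
    -- separated eigenvalues and eigenfunctions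
    (lamS : ℝ → ℝ → ℕ → ℝ) (wS wS1 : ℝ → ℝ → ℕ → ℝ → ℝ)
    (hSmono : ∀ α ∈ Set.Ico 0 Real.pi, ∀ β ∈ Set.Ioc 0 Real.pi,
      StrictMono (lamS α β))
    (hSβmono : ∀ α ∈ Set.Ico 0 Real.pi, ∀ β₁ ∈ Set.Ioc 0 Real.pi,
      ∀ β₂ ∈ Set.Ioc 0 Real.pi, ∀ n, β₁ < β₂ → lamS α β₁ n < lamS α β₂ n)
    (hSsol : ∀ α ∈ Set.Ico 0 Real.pi, ∀ β ∈ Set.Ioc 0 Real.pi, ∀ n,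
      SLSolution a b (lamS α β n) p q r s (wS α β n) (wS1 α β n))
    (hSbc : ∀ α ∈ Set.Ico 0 Real.pi, ∀ β ∈ Set.Ioc 0 Real.pi, ∀ n,
      Real.cos α * wS α β n a - Real.sin α * wS1 α β n a = 0 ∧
      Real.cos β * wS α β n b - Real.sin β * wS1 α β n b = 0)
    (hSnt : ∀ α ∈ Set.Ico 0 Real.pi, ∀ β ∈ Set.Ioc 0 Real.pi, ∀ n,
      ∃ x ∈ Set.Icc a b, wS α β n x ≠ 0)
    (hSzeros : ∀ α ∈ Set.Ico 0 Real.pi, ∀ β ∈ Set.Ioc 0 Real.pi, ∀ n,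
      {x ∈ Set.Ioo a b | wS α β n x = 0}.Finite ∧
      {x ∈ Set.Ioo a b | wS α β n x = 0}.ncard = n) :
    (∀ α ∈ Set.Ico 0 Real.pi, ∀ β ∈ Set.Ioc 0 Real.pi, ∀ n : ℕ,
      ∀ (lam : ℝ) (y y1 : ℝ → ℝ),
        SLSolution a b lam p q r s y y1 →
        Real.cos α * y a - Real.sin α * y1 a = 0 →
        Real.cos β * y b - Real.sin β * y1 b = 0 →
        (∃ x ∈ Set.Icc a b, y x ≠ 0) →
        lamD n < lam →
        ∃ Z : Finset ℝ, (↑Z : Set ℝ) ⊆ {x ∈ Set.Ioo a b | y x = 0} ∧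
          n + 1 ≤ Z.card) ∧
    (∀ α ∈ Set.Ico 0 Real.pi, ∀ β ∈ Set.Ioc 0 Real.pi, ∀ n,
      lamS α β n ≤ lamD n) :=
  stmt17_general a b hab p q r s hp hq hr hs hppos hrpos lamD Psi Psi1 hDsol hDbc hDzeros lamS wS
    wS1 hSsol hSzeros
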